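/- arXiv:2010.05727 — 8 statements merged into one kernel-verified Lean document; each statement's English description precedes it below -/
import Mathlib

section
/- Let p > 1 and let 0 < ε < p − 1. Set ζ(ε) = p^p·ε/(p−ε−1)^p. Then for all real numbers a, b > 0 one has |b − a|^{p−2}(b − a)(a^{−ε} − b^{−ε}) ≥ ζ(ε)·|b^{(p−ε−1)/p} − a^{(p−ε−1)/p}|^p. -/
/-!
Put `γ = (p - ε - 1) / p`. On `[a, b]` the function `t ↦ t ^ (γ - 1)` integrates to
`(b ^ γ - a ^ γ) / γ`, and its `p`-th power `t ↦ t ^ (-ε - 1)` integrates to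
`(a ^ (-ε) - b ^ (-ε)) / ε`. Jensen's inequality for `x ↦ x ^ p` on the average over `[a, b]`
is then exactly the claim for `a < b`; both sides are symmetric in `a` and `b`.
-/

open MeasureTheory Set Real intervalIntegral

theorem intervalIntegral_rpow_le_mul_integral_rpow {f : ℝ → ℝ} {a b p : ℝ} (hab : a < b)
    (hp : 1 ≤ p) (hf : ContinuousOn f (Icc a b)) (hf0 : ∀ x ∈ Icc a b, 0 ≤ f x) :
    (∫ x in a..b, f x) ^ p ≤ (b - a) ^ (p - 1) * ∫ x in a..b, f x ^ p := by
  have hba : 0 < b - a := sub_pos.mpr hab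
  have hpow : Continuous (fun y : ℝ => y ^ p) := continuous_rpow_const (by linarith)
  have jensen : (⨍ x in a..b, f x) ^ p ≤ ⨍ x in a..b, f x ^ p := by
    rw [uIoc_of_le hab.le]
    refine (convexOn_rpow hp).map_set_average_le hpow.continuousOn isClosed_Ici
      (by simp [hab]) measure_Ioc_lt_top.ne ?_
      (hf.integrableOn_Icc.mono_set Ioc_subset_Icc_self)
      ((hpow.comp_continuousOn hf).integrableOn_Icc.mono_set Ioc_subset_Icc_self)
    filter_upwards [ae_restrict_mem measurableSet_Ioc] with x hx
    exact hf0 x (Ioc_subset_Icc_self hx)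
  rw [interval_average_eq_div, interval_average_eq_div,
    div_rpow (integral_nonneg hab.le hf0) hba.le, div_le_div_iff₀ (by positivity) hba,
    ← le_div_iff₀ hba] at jensen
  rw [rpow_sub_one hba.ne']
  exact jensen.trans_eq (by ring)

theorem two_point_log_inequality_of_lt {p ε a b : ℝ} (hε0 : 0 < ε) (hε1 : ε < p - 1)
    (ha : 0 < a) (hab : a < b) :
    p ^ p * ε / (p - ε - 1) ^ p * (b ^ ((p - ε - 1) / p) - a ^ ((p - ε - 1) / p)) ^ p ≤
      (b - a) ^ (p - 1) * (a ^ (-ε) - b ^ (-ε)) := by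
  have hp : 0 < p := by linarith
  set γ := (p - ε - 1) / p with hγ
  have hγ0 : 0 < γ := div_pos (by linarith) hp
  have hpos : ∀ x ∈ Icc a b, 0 < x := fun x hx => ha.trans_le hx.1
  have hzero : (0 : ℝ) ∉ uIcc a b := by
    rw [uIcc_of_le hab.le]; exact fun h => (hpos 0 h).false
  have jensen := intervalIntegral_rpow_le_mul_integral_rpow (f := fun t => t ^ (γ - 1))
    (p := p) hab (by linarith) (continuousOn_id.rpow_const fun x hx => Or.inl (hpos x hx).ne')
    fun x hx => (rpow_pos_of_pos (hpos x hx) _).le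
  have hpow : ∀ x ∈ uIcc a b, (x ^ (γ - 1)) ^ p = x ^ (-ε - 1) := by
    intro x hx
    rw [uIcc_of_le hab.le] at hx
    rw [← rpow_mul (hpos x hx).le, hγ]
    congr 1; field_simp; ring
  rw [integral_congr hpow, integral_rpow (Or.inl (by linarith)),
    integral_rpow (Or.inr ⟨by linarith, hzero⟩)] at jensen
  have hG : 0 ≤ b ^ γ - a ^ γ := sub_nonneg.mpr (rpow_le_rpow ha.le hab.le hγ0.le)
  have hconst : p ^ p * ε / (p - ε - 1) ^ p = ε / γ ^ p := by
    rw [hγ, div_rpow (by linarith) hp.le]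
    field_simp
  rw [sub_add_cancel, show -ε - 1 + 1 = -ε by ring, div_rpow hG hγ0.le] at jensen
  calc p ^ p * ε / (p - ε - 1) ^ p * (b ^ γ - a ^ γ) ^ p
      = ε * ((b ^ γ - a ^ γ) ^ p / γ ^ p) := by rw [hconst]; ring
    _ ≤ ε * ((b - a) ^ (p - 1) * ((b ^ (-ε) - a ^ (-ε)) / -ε)) := by gcongr
    _ = (b - a) ^ (p - 1) * (a ^ (-ε) - b ^ (-ε)) := by field_simp; ring

theorem two_point_log_inequality_general (p ε : ℝ) (hε0 : 0 < ε) (hε1 : ε < p - 1) :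
    ∀ a b : ℝ, 0 < a → 0 < b →
      |b - a| ^ (p - 2) * (b - a) * (a ^ (-ε) - b ^ (-ε)) ≥
        (p ^ p * ε / (p - ε - 1) ^ p) *
          |b ^ ((p - ε - 1) / p) - a ^ ((p - ε - 1) / p)| ^ p := by
  intro a b ha hb
  wlog hab : a ≤ b generalizing a b
  · convert this b a hb ha (le_of_not_ge hab) using 1
    · rw [abs_sub_comm]; ring
    · rw [abs_sub_comm]
  have hp : 0 < p := by linarith
  rcases hab.eq_or_lt with rfl | hlt
  · simp [zero_rpow hp.ne']
  have hγ : 0 ≤ (p - ε - 1) / p := div_nonneg (by linarith) hp.le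
  rw [abs_of_pos (sub_pos.2 hlt), abs_of_nonneg (sub_nonneg.2 (rpow_le_rpow ha.le hab hγ)),
    ← rpow_add_one (sub_pos.2 hlt).ne', show p - 2 + 1 = p - 1 by ring]
  exact two_point_log_inequality_of_lt hε0 hε1 ha hlt

/-- Lemma 6.2, general case: for `p > 1`, `0 < ε < p - 1` and `ζ(ε) = p^p ε/(p-ε-1)^p`,
for all `a, b > 0` one has
`|b-a|^{p-2}(b-a)(a^{-ε} - b^{-ε}) ≥ ζ(ε) |b^{(p-ε-1)/p} - a^{(p-ε-1)/p}|^p`. -/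
theorem two_point_log_inequality (p ε : ℝ) (hp : 1 < p) (hε0 : 0 < ε) (hε1 : ε < p - 1) :
    ∀ a b : ℝ, 0 < a → 0 < b →
      |b - a| ^ (p - 2) * (b - a) * (a ^ (-ε) - b ^ (-ε)) ≥
        (p ^ p * ε / (p - ε - 1) ^ p) *
          |b ^ ((p - ε - 1) / p) - a ^ ((p - ε - 1) / p)| ^ p :=
  two_point_log_inequality_general p ε hε0 hε1
end

section
/- Let p > 1, let 0 < ε < p − 1, let r = ⌈p⌉ be the smallest integer greater than or equal to p, and let s, t be real numbers with 1 < s < 2 and t > 1. If t − 1 ≥ (r·2^{r−1}/ε)·t·(s − 1), then s − 1 ≤ t^{ε} − s^{p} (equivalently, s^p + s − 2 ≤ t^{ε} − 1). -/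
/-!
Put `r = ⌈p⌉₊ ≥ 2`. Since `1 < s < 2`, the geometric sum gives
`s ^ p + s - 2 ≤ s ^ r + s - 2 = (s - 1) (1 + s + ⋯ + s ^ (r - 1) + 1) ≤ (s - 1) 2 ^ r ≤ r 2 ^ (r - 1) (s - 1)`,
while `t ^ ε = exp (ε log t) ≥ 1 + ε (1 - t⁻¹)`, and the hypothesis says precisely
`r 2 ^ (r - 1) (s - 1) ≤ ε (1 - t⁻¹)`.
-/

open Finset

theorem pow_add_sub_two_le_mul_two_pow {R : Type*} [CommRing R] [LinearOrder R]
    [IsStrictOrderedRing R] {s : R} (hs1 : 1 ≤ s) (hs2 : s ≤ 2) (n : ℕ) :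
    s ^ n + s - 2 ≤ (s - 1) * 2 ^ n := by
  have hsum : ∑ i ∈ range n, s ^ i ≤ ∑ i ∈ range n, (2 : R) ^ i :=
    sum_le_sum fun i _ => pow_le_pow_left₀ (by linarith) hs2 i
  have hgeom_s : (s - 1) * ∑ i ∈ range n, s ^ i = s ^ n - 1 := by
    rw [mul_comm, geom_sum_mul]
  have hgeom_two : ∑ i ∈ range n, (2 : R) ^ i = 2 ^ n - 1 := by
    have := geom_sum_mul (2 : R) n
    rwa [show (2 : R) - 1 = 1 by norm_num, mul_one] at this
  calc s ^ n + s - 2 = (s - 1) * (∑ i ∈ range n, s ^ i + 1) := by rw [mul_add, hgeom_s]; ring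
    _ ≤ (s - 1) * (2 ^ n - 1 + 1) := by
      rw [← hgeom_two]
      exact mul_le_mul_of_nonneg_left (by linarith) (by linarith)
    _ = (s - 1) * 2 ^ n := by ring

theorem two_pow_le_mul_two_pow_pred {n : ℕ} (hn : 2 ≤ n) : (2 : ℝ) ^ n ≤ n * 2 ^ (n - 1) := by
  obtain ⟨m, rfl⟩ := Nat.exists_eq_add_of_le' (show 1 ≤ n by omega)
  rw [Nat.add_sub_cancel, pow_succ, mul_comm]
  gcongr
  exact_mod_cast hn

theorem Real.one_add_mul_one_sub_inv_le_rpow {t ε : ℝ} (ht : 0 < t) (hε : 0 ≤ ε) :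
    1 + ε * (1 - t⁻¹) ≤ t ^ ε := by
  rw [Real.rpow_def_of_pos ht]
  calc 1 + ε * (1 - t⁻¹) ≤ 1 + ε * Real.log t := by
        gcongr; exact Real.one_sub_inv_le_log_of_pos ht
    _ ≤ Real.exp (Real.log t * ε) := by linarith [Real.add_one_le_exp (Real.log t * ε)]

theorem case_ii_estimate_general (p ε s t : ℝ) (hp : 1 < p) (hε0 : 0 < ε)
    (hs1 : 1 < s) (hs2 : s < 2) (ht : 1 < t)
    (h : t - 1 ≥ ((⌈p⌉₊ : ℝ) * 2 ^ (⌈p⌉₊ - 1) / ε) * t * (s - 1)) :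
    s - 1 ≤ t ^ ε - s ^ p := by
  set r := ⌈p⌉₊
  have hr : 2 ≤ r := Nat.lt_ceil.mpr (by exact_mod_cast hp)
  have hsp : s ^ p ≤ s ^ r := by
    simpa using Real.rpow_le_rpow_of_exponent_le hs1.le (Nat.le_ceil p)
  have hC : r * 2 ^ (r - 1) * (s - 1) ≤ ε * (1 - t⁻¹) := by
    rw [div_mul_eq_mul_div, div_mul_eq_mul_div, ge_iff_le, div_le_iff₀ hε0] at h
    rw [show ε * (1 - t⁻¹) = ε * (t - 1) / t by field_simp, le_div_iff₀ (by linarith)]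
    linarith
  have hpow := pow_add_sub_two_le_mul_two_pow hs1.le hs2.le r
  have htwo := mul_le_mul_of_nonneg_left (two_pow_le_mul_two_pow_pred hr) (by linarith : 0 ≤ s - 1)
  linarith [Real.one_add_mul_one_sub_inv_le_rpow (by linarith : 0 < t) hε0.le]

/-- Case (ii) in the proof of Lemma 6.1: for `p > 1`, `0 < ε < p - 1`, `r = ⌈p⌉`,
`1 < s < 2`, `t > 1`, if `t - 1 ≥ (r 2^{r-1}/ε) t (s-1)` then `s - 1 ≤ t^ε - s^p`. -/
theorem case_ii_estimate (p ε s t : ℝ) (hp : 1 < p) (hε0 : 0 < ε) (hε1 : ε < p - 1)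
    (hs1 : 1 < s) (hs2 : s < 2) (ht : 1 < t)
    (h : t - 1 ≥ ((⌈p⌉₊ : ℝ) * 2 ^ (⌈p⌉₊ - 1) / ε) * t * (s - 1)) :
    s - 1 ≤ t ^ ε - s ^ p :=
  case_ii_estimate_general p ε s t hp hε0 hs1 hs2 ht h
end

section
/- Let p > 1. There exists a constant C = C(p) > 0, depending only on p, such that for all real numbers a ≥ b ≥ 0 and all ψ₁, ψ₂ ≥ 0, one has (a − b)^{p−1}·(a·ψ₁^p − b·ψ₂^p) ≥ (1/2)·(a − b)^p·(max{ψ₁, ψ₂})^p − C·(max{a, b})^p·|ψ₁ − ψ₂|^p. -/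
/-!
If `ψ₂ ≤ ψ₁`, the left side already dominates `(a - b)^p ψ₁^p`. If `ψ₁ ≤ ψ₂`, write the left side as
`(a - b)^p ψ₂^p - (a - b)^(p-1) a (ψ₂^p - ψ₁^p)`; convexity of `t ↦ t^p` bounds the defect by
`((a - b) ψ₂)^(p-1) · p a (ψ₂ - ψ₁)`, and Young's inequality with weight `1/2` splits this into
half of the main term plus `2^(p-1) p^p a^p (ψ₂ - ψ₁)^p`.
-/

open Real

lemma rpow_sub_one_mul_self {p x : ℝ} (hp : p ≠ 0) (hx : 0 ≤ x) : x ^ (p - 1) * x = x ^ p := by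
  rw [← rpow_add_one' hx (by simpa using hp), sub_add_cancel]

lemma rpow_sub_rpow_le_mul_rpow_sub_one {p x y : ℝ} (hp : 1 ≤ p) (hx : 0 ≤ x) (hxy : x ≤ y) :
    y ^ p - x ^ p ≤ p * y ^ (p - 1) * (y - x) := by
  rcases hxy.eq_or_lt with rfl | hlt
  · simp
  have hslope := (convexOn_rpow hp).slope_le_of_hasDerivAt hx (hx.trans hlt.le) hlt
    (hasDerivAt_rpow_const (Or.inr hp))
  rwa [slope_def_field, div_le_iff₀ (sub_pos.2 hlt)] at hslope

lemma rpow_sub_one_mul_le_half_rpow_add {p X Y : ℝ} (hp : 1 ≤ p) (hX : 0 ≤ X) (hY : 0 ≤ Y) :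
    X ^ (p - 1) * Y ≤ X ^ p / 2 + 2 ^ (p - 1) * Y ^ p := by
  have hp0 : p ≠ 0 := by positivity
  have hp1 : 0 ≤ p - 1 := by linarith
  rcases le_total X (2 * Y) with h | h
  · calc X ^ (p - 1) * Y ≤ (2 * Y) ^ (p - 1) * Y := by gcongr
      _ = 2 ^ (p - 1) * Y ^ p := by
        rw [mul_rpow zero_le_two hY, mul_assoc, rpow_sub_one_mul_self hp0 hY]
      _ ≤ X ^ p / 2 + 2 ^ (p - 1) * Y ^ p := by
        have : 0 ≤ X ^ p := by positivity
        linarith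
  · calc X ^ (p - 1) * Y ≤ X ^ (p - 1) * (X / 2) := by gcongr; linarith
      _ = X ^ p / 2 := by rw [← rpow_sub_one_mul_self hp0 hX]; ring
      _ ≤ X ^ p / 2 + 2 ^ (p - 1) * Y ^ p := by
        have : 0 ≤ 2 ^ (p - 1) * Y ^ p := by positivity
        linarith

section
variable {p a b ψ₁ ψ₂ : ℝ}

lemma subsolution_estimate_of_ge (hp : 0 < p) (hba : b ≤ a) (hb : 0 ≤ b) (hψ₂ : 0 ≤ ψ₂) (h : ψ₂ ≤ ψ₁) :
    (a - b) ^ p * ψ₁ ^ p ≤ (a - b) ^ (p - 1) * (a * ψ₁ ^ p - b * ψ₂ ^ p) := by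
  have hd : 0 ≤ a - b := sub_nonneg.2 hba
  have hψ : b * ψ₂ ^ p ≤ b * ψ₁ ^ p := by gcongr
  calc (a - b) ^ p * ψ₁ ^ p = (a - b) ^ (p - 1) * ((a - b) * ψ₁ ^ p) := by
        rw [← rpow_sub_one_mul_self hp.ne' hd]; ring
    _ ≤ (a - b) ^ (p - 1) * (a * ψ₁ ^ p - b * ψ₂ ^ p) := by gcongr; linarith

lemma subsolution_estimate_of_le (hp : 1 ≤ p) (hba : b ≤ a) (hb : 0 ≤ b) (hψ₁ : 0 ≤ ψ₁)
    (h : ψ₁ ≤ ψ₂) :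
    (1 / 2) * (a - b) ^ p * ψ₂ ^ p - 2 ^ (p - 1) * p ^ p * a ^ p * (ψ₂ - ψ₁) ^ p ≤
      (a - b) ^ (p - 1) * (a * ψ₁ ^ p - b * ψ₂ ^ p) := by
  have hp0 : 0 < p := by linarith
  have hd : 0 ≤ a - b := sub_nonneg.2 hba
  have ha : 0 ≤ a := hb.trans hba
  have hψ₂ : 0 ≤ ψ₂ := hψ₁.trans h
  have hδ : 0 ≤ ψ₂ - ψ₁ := sub_nonneg.2 h
  have hsplit : (a - b) ^ (p - 1) * (a * ψ₁ ^ p - b * ψ₂ ^ p) =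
      (a - b) ^ p * ψ₂ ^ p - (a - b) ^ (p - 1) * a * (ψ₂ ^ p - ψ₁ ^ p) := by
    rw [← rpow_sub_one_mul_self hp0.ne' hd]; ring
  have hdefect : (a - b) ^ (p - 1) * a * (ψ₂ ^ p - ψ₁ ^ p) ≤
      (1 / 2) * (a - b) ^ p * ψ₂ ^ p + 2 ^ (p - 1) * p ^ p * a ^ p * (ψ₂ - ψ₁) ^ p :=
    calc (a - b) ^ (p - 1) * a * (ψ₂ ^ p - ψ₁ ^ p)
        ≤ (a - b) ^ (p - 1) * a * (p * ψ₂ ^ (p - 1) * (ψ₂ - ψ₁)) := by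
          gcongr; exact rpow_sub_rpow_le_mul_rpow_sub_one hp hψ₁ h
      _ = ((a - b) * ψ₂) ^ (p - 1) * (p * a * (ψ₂ - ψ₁)) := by
          rw [mul_rpow hd hψ₂]; ring
      _ ≤ ((a - b) * ψ₂) ^ p / 2 + 2 ^ (p - 1) * (p * a * (ψ₂ - ψ₁)) ^ p :=
          rpow_sub_one_mul_le_half_rpow_add hp (by positivity) (by positivity)
      _ = (1 / 2) * (a - b) ^ p * ψ₂ ^ p + 2 ^ (p - 1) * p ^ p * a ^ p * (ψ₂ - ψ₁) ^ p := by
          rw [mul_rpow hd hψ₂, mul_rpow (by positivity) hδ, mul_rpow hp0.le ha]; ring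
  linarith

end

/-- Pointwise estimate (3.4) in the energy estimate for subsolutions: for `p > 1` there is
`C = C(p) > 0` such that for all `a ≥ b ≥ 0` and `ψ₁, ψ₂ ≥ 0`,
`(a-b)^{p-1}(a ψ₁^p - b ψ₂^p) ≥ (1/2)(a-b)^p max{ψ₁,ψ₂}^p - C max{a,b}^p |ψ₁-ψ₂|^p`. -/
theorem subsolution_pointwise_estimate (p : ℝ) (hp : 1 < p) :
    ∃ C : ℝ, 0 < C ∧
      ∀ a b ψ₁ ψ₂ : ℝ, b ≤ a → 0 ≤ b → 0 ≤ ψ₁ → 0 ≤ ψ₂ →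
        (a - b) ^ (p - 1) * (a * ψ₁ ^ p - b * ψ₂ ^ p) ≥
          (1 / 2) * (a - b) ^ p * (max ψ₁ ψ₂) ^ p -
            C * (max a b) ^ p * |ψ₁ - ψ₂| ^ p := by
  have hp0 : 0 < p := by linarith
  refine ⟨2 ^ (p - 1) * p ^ p, by positivity, fun a b ψ₁ ψ₂ hba hb hψ₁ hψ₂ => ?_⟩
  have ha : 0 ≤ a := hb.trans hba
  rw [max_eq_left hba, ge_iff_le]
  rcases le_total ψ₂ ψ₁ with h | h
  · rw [max_eq_left h]
    have hmain : 0 ≤ (a - b) ^ p * ψ₁ ^ p := by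
      have := sub_nonneg.2 hba
      positivity
    have hrest : 0 ≤ 2 ^ (p - 1) * p ^ p * a ^ p * |ψ₁ - ψ₂| ^ p := by positivity
    linarith [subsolution_estimate_of_ge hp0 hba hb hψ₂ h]
  · rw [max_eq_right h, abs_sub_comm, abs_of_nonneg (sub_nonneg.2 h)]
    exact subsolution_estimate_of_le hp.le hba hb hψ₁ h
end

section
/- Let p ≥ 2 and let k be a real number. For all real numbers a, b and all ψ₁, ψ₂ ≥ 0, writing w_a = max{a − k, 0} and w_b = max{b − k, 0}, one has |a − b|^{p−2}(a − b)·(w_a·ψ₁^p − w_b·ψ₂^p) ≥ |w_a − w_b|^{p−2}(w_a − w_b)·(w_a·ψ₁^p − w_b·ψ₂^p). -/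
/-!
The map `t ↦ |t|^{p-2} t` is monotone, and the estimate holds for every monotone `φ` in its
place. If `a, b > k` then `w_a - w_b = a - b` and both sides agree; if `a, b ≤ k` then the common
factor `w_a ψ₁^p - w_b ψ₂^p` vanishes. If exactly one of them exceeds `k`, say `b ≤ k < a`, then
`0 ≤ w_a - w_b ≤ a - b` and the common factor `w_a ψ₁^p` is nonnegative.
-/

open Set

lemma rpow_sub_two_mul_self_monotoneOn {p : ℝ} (hp : 1 ≤ p) :
    MonotoneOn (fun t : ℝ => t ^ (p - 2) * t) (Ici 0) := by
  intro s hs t ht hst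
  rcases (mem_Ici.mp hs).eq_or_lt with rfl | hs_pos
  · simpa using mul_nonneg (Real.rpow_nonneg ht (p - 2)) ht
  have hsub : ∀ u : ℝ, 0 < u → u ^ (p - 2) * u = u ^ (p - 1) := fun u hu => by
    rw [← Real.rpow_add_one hu.ne']
    ring_nf
  dsimp only
  rw [hsub s hs_pos, hsub t (hs_pos.trans_le hst)]
  exact Real.rpow_le_rpow hs_pos.le hst (by linarith)

lemma abs_rpow_sub_two_mul_self_monotone {p : ℝ} (hp : 1 ≤ p) :
    Monotone (fun t : ℝ => |t| ^ (p - 2) * t) := by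
  refine monotone_of_odd_of_monotoneOn_nonneg (fun t => by simp only [abs_neg, mul_neg]) ?_
  refine (rpow_sub_two_mul_self_monotoneOn hp).congr fun t ht => ?_
  simp only [abs_of_nonneg (mem_Ici.mp ht)]

lemma monotone_mul_max_sub_max_le {φ : ℝ → ℝ} (hφ : Monotone φ) (k a b : ℝ) {c₁ c₂ : ℝ}
    (hc₁ : 0 ≤ c₁) (hc₂ : 0 ≤ c₂) :
    φ (max (a - k) 0 - max (b - k) 0) * (max (a - k) 0 * c₁ - max (b - k) 0 * c₂) ≤
      φ (a - b) * (max (a - k) 0 * c₁ - max (b - k) 0 * c₂) := by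
  rcases le_or_gt (a - k) 0 with ha | ha <;> rcases le_or_gt (b - k) 0 with hb | hb
  · simp [max_eq_right ha, max_eq_right hb]
  · rw [max_eq_right ha, max_eq_left hb.le]
    exact mul_le_mul_of_nonpos_right (hφ (by linarith)) (by nlinarith)
  · rw [max_eq_left ha.le, max_eq_right hb]
    exact mul_le_mul_of_nonneg_right (hφ (by linarith)) (by nlinarith)
  · rw [max_eq_left ha.le, max_eq_left hb.le, sub_sub_sub_cancel_right]

/-- Pointwise truncation estimate in the energy estimate for subsolutions: for `p ≥ 2`,
`k ∈ ℝ`, all `a, b ∈ ℝ` and `ψ₁, ψ₂ ≥ 0`, with `w_a = (a-k)₊` and `w_b = (b-k)₊`,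
`|a-b|^{p-2}(a-b)(w_a ψ₁^p - w_b ψ₂^p) ≥ |w_a-w_b|^{p-2}(w_a-w_b)(w_a ψ₁^p - w_b ψ₂^p)`. -/
theorem truncation_pointwise_estimate (p k : ℝ) (hp : 2 ≤ p) :
    ∀ a b ψ₁ ψ₂ : ℝ, 0 ≤ ψ₁ → 0 ≤ ψ₂ →
      |a - b| ^ (p - 2) * (a - b) *
          (max (a - k) 0 * ψ₁ ^ p - max (b - k) 0 * ψ₂ ^ p) ≥
        |max (a - k) 0 - max (b - k) 0| ^ (p - 2) * (max (a - k) 0 - max (b - k) 0) *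
          (max (a - k) 0 * ψ₁ ^ p - max (b - k) 0 * ψ₂ ^ p) := by
  intro a b ψ₁ ψ₂ hψ₁ hψ₂
  exact monotone_mul_max_sub_max_le (abs_rpow_sub_two_mul_self_monotone (by linarith)) k a b
    (Real.rpow_nonneg hψ₁ p) (Real.rpow_nonneg hψ₂ p)
end

section
/- Let p > 1 and let k be a real number. For all real numbers a and b, one has |a − b|^{p−2}(a − b)·(a − k)₊ ≥ −((b − k)₊)^{p−1}·(a − k)₊. -/
/-!
Only the case `b > a > k` has content: there the left side is `-(b - a)^(p-1) (a - k)` and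
`0 < b - a < b - k`, so monotonicity of `t ↦ t^(p-1)` concludes.
-/

open Real

theorem abs_rpow_sub_one_mul_of_neg {x : ℝ} (hx : x < 0) (s : ℝ) :
    |x| ^ (s - 1) * x = -|x| ^ s := by
  rw [rpow_sub_one (abs_ne_zero.2 hx.ne), abs_of_neg hx]
  field_simp [hx.ne]

theorem neg_max_rpow_le_abs_rpow_sub_one_mul {s x y : ℝ} (hs : 0 ≤ s) (hxy : 0 < x + y) :
    -max y 0 ^ s ≤ |x| ^ (s - 1) * x := by
  rcases le_or_gt 0 x with hx | hx
  · calc -max y 0 ^ s ≤ 0 := neg_nonpos.2 (rpow_nonneg (le_max_right _ _) _)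
      _ ≤ |x| ^ (s - 1) * x := mul_nonneg (rpow_nonneg (abs_nonneg x) _) hx
  · rw [abs_rpow_sub_one_mul_of_neg hx, neg_le_neg_iff]
    have hxy' : |x| ≤ max y 0 := by
      rw [abs_of_neg hx]
      exact le_max_of_le_left (by linarith)
    exact rpow_le_rpow (abs_nonneg x) hxy' hs

/-- Pointwise estimate for the nonlocal tail term (estimate of `J_ε²`): for `p > 1`, `k ∈ ℝ`
and all real `a, b`, `|a-b|^{p-2}(a-b)(a-k)₊ ≥ -((b-k)₊)^{p-1} (a-k)₊`. -/
theorem tail_pointwise_estimate (p k : ℝ) (hp : 1 < p) :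
    ∀ a b : ℝ,
      |a - b| ^ (p - 2) * (a - b) * max (a - k) 0 ≥
        -(max (b - k) 0) ^ (p - 1) * max (a - k) 0 := by
  intro a b
  rcases le_or_gt a k with hak | hak
  · simp [max_eq_right (sub_nonpos.2 hak)]
  · have key := neg_max_rpow_le_abs_rpow_sub_one_mul (x := a - b) (y := b - k)
      (sub_nonneg.2 hp.le) (by linarith)
    rw [show p - 2 = p - 1 - 1 by ring]
    exact mul_le_mul_of_nonneg_right key (le_max_right _ _)
end

section
/- Let p > 1. For all real numbers v₁, v₂ > 0 and all ψ₁, ψ₂ ≥ 0 one has |v₁ − v₂|^{p−2}(v₁ − v₂)·((v₁/v₂)^{p−1}·ψ₁ − (v₂/v₁)^{p−1}·ψ₂) ≥ |v₁ − v₂|^{p−2}(v₁ − v₂)·(ψ₁ − ψ₂). -/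
/-! Writing `r = v₁ / v₂`, the difference of the two sides is
`|v₁ - v₂| ^ (p - 2) * (ψ₁ (v₁ - v₂) (r ^ (p - 1) - 1) + ψ₂ (v₂ - v₁) (r⁻¹ ^ (p - 1) - 1))`,
and each product `(x - y) ((x / y) ^ (p - 1) - 1)` is nonnegative because `t ↦ t ^ (p - 1)`
is monotone, so its two factors have the same sign. -/

lemma sub_mul_div_rpow_sub_one_nonneg {q x y : ℝ} (hq : 0 ≤ q) (hx : 0 < x) (hy : 0 < y) :
    0 ≤ (x - y) * ((x / y) ^ q - 1) := by
  rcases le_total y x with hyx | hxy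
  · exact mul_nonneg (sub_nonneg.2 hyx)
      (sub_nonneg.2 (Real.one_le_rpow ((one_le_div hy).2 hyx) hq))
  · exact mul_nonneg_of_nonpos_of_nonpos (sub_nonpos.2 hxy)
      (sub_nonpos.2 (Real.rpow_le_one (div_pos hx hy).le ((div_le_one hy).2 hxy) hq))

/-- Pointwise inequality showing the reciprocal of a positive supersolution is a subsolution:
for `p > 1`, all `v₁, v₂ > 0` and `ψ₁, ψ₂ ≥ 0`,
`|v₁-v₂|^{p-2}(v₁-v₂)((v₁/v₂)^{p-1} ψ₁ - (v₂/v₁)^{p-1} ψ₂)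
 ≥ |v₁-v₂|^{p-2}(v₁-v₂)(ψ₁ - ψ₂)`. -/
theorem reciprocal_subsolution_pointwise (p : ℝ) (hp : 1 < p) :
    ∀ v₁ v₂ ψ₁ ψ₂ : ℝ, 0 < v₁ → 0 < v₂ → 0 ≤ ψ₁ → 0 ≤ ψ₂ →
      |v₁ - v₂| ^ (p - 2) * (v₁ - v₂) *
          ((v₁ / v₂) ^ (p - 1) * ψ₁ - (v₂ / v₁) ^ (p - 1) * ψ₂) ≥
        |v₁ - v₂| ^ (p - 2) * (v₁ - v₂) * (ψ₁ - ψ₂) := by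
  intro v₁ v₂ ψ₁ ψ₂ hv₁ hv₂ hψ₁ hψ₂
  have hq : 0 ≤ p - 1 := by linarith
  have h₁₂ := sub_mul_div_rpow_sub_one_nonneg hq hv₁ hv₂
  have h₂₁ := sub_mul_div_rpow_sub_one_nonneg hq hv₂ hv₁
  have hw : 0 ≤ |v₁ - v₂| ^ (p - 2) := by positivity
  rw [ge_iff_le, ← sub_nonneg]
  calc 0 ≤ |v₁ - v₂| ^ (p - 2) * (ψ₁ * ((v₁ - v₂) * ((v₁ / v₂) ^ (p - 1) - 1))
          + ψ₂ * ((v₂ - v₁) * ((v₂ / v₁) ^ (p - 1) - 1))) :=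
        mul_nonneg hw (add_nonneg (mul_nonneg hψ₁ h₁₂) (mul_nonneg hψ₂ h₂₁))
    _ = _ := by ring
end

section
/- Let p > 1, K > 0, λ > 0 and b ∈ ℝ, and let T₀ < T₁ be real numbers. Suppose W : [T₀, T₁] → ℝ is continuously differentiable, nonincreasing, and satisfies W(T₀) = b. Suppose m : [T₀, T₁] → [0, ∞) is a measurable function such that W′(t) + (m(t)/K)·(b + λ − W(t))^p ≤ 0 for all t ∈ [T₀, T₁]. Then ∫_{T₀}^{T₁} m(t) dt ≤ K/((p − 1)·λ^{p−1}). -/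
/-!
With `c = b + λ - W`, which is `≥ λ` because `W` is nonincreasing, the hypothesis reads
`m / K ≤ c' c^{-p} = (c^{1-p} / (1 - p))'`. Integrating gives
`∫ m / K ≤ (c(T₀)^{1-p} - c(T₁)^{1-p}) / (p - 1) ≤ λ^{1-p} / (p - 1)`.
If `m` is not integrable, its integral is `0` and the bound is trivial.
-/

open Set MeasureTheory

theorem integral_le_of_mul_rpow_le_deriv {a b p : ℝ} {c c' m : ℝ → ℝ} (hab : a ≤ b)
    (hp : p ≠ 1) (hc_pos : ∀ t ∈ Icc a b, 0 < c t) (hc_cont : ContinuousOn c (Icc a b))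
    (hc_deriv : ∀ t ∈ Ioo a b, HasDerivAt c (c' t) t) (hm_int : IntegrableOn m (Icc a b))
    (hmc : ∀ t ∈ Ioo a b, m t * c t ^ p ≤ c' t) :
    ∫ t in a..b, m t ≤ (c a ^ (1 - p) - c b ^ (1 - p)) / (p - 1) := by
  have hp' : 1 - p ≠ 0 := sub_ne_zero.mpr hp.symm
  have hftc := intervalIntegral.integral_le_sub_of_hasDeriv_right_of_le hab
    (g := fun t => c t ^ (1 - p) / (1 - p)) (g' := fun t => c' t * c t ^ (-p))
    ((hc_cont.rpow_const fun t ht => .inl (hc_pos t ht).ne').div_const _)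
    (fun t ht => by
      have h := ((hc_deriv t ht).rpow_const (p := 1 - p)
        (.inl (hc_pos t (Ioo_subset_Icc_self ht)).ne')).div_const (1 - p)
      rw [show 1 - p - 1 = -p by ring, mul_right_comm, mul_div_assoc, div_self hp', mul_one] at h
      exact h.hasDerivWithinAt)
    hm_int
    (fun t ht => by
      have hct := hc_pos t (Ioo_subset_Icc_self ht)
      rw [Real.rpow_neg hct.le, ← div_eq_mul_inv, le_div_iff₀ (Real.rpow_pos_of_pos hct p)]
      exact hmc t ht)
  calc ∫ t in a..b, m t ≤ c b ^ (1 - p) / (1 - p) - c a ^ (1 - p) / (1 - p) := hftc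
    _ = (c a ^ (1 - p) - c b ^ (1 - p)) / (p - 1) := by
      rw [← neg_sub p 1, div_neg, div_neg]; ring

theorem integral_le_one_div_of_mul_rpow_le_deriv {a b p lam : ℝ} {c c' m : ℝ → ℝ} (hab : a ≤ b)
    (hp : 1 < p) (hlam : 0 < lam) (hc_ge : ∀ t ∈ Icc a b, lam ≤ c t)
    (hc_cont : ContinuousOn c (Icc a b)) (hc_deriv : ∀ t ∈ Ioo a b, HasDerivAt c (c' t) t)
    (hmc : ∀ t ∈ Ioo a b, m t * c t ^ p ≤ c' t) :
    ∫ t in a..b, m t ≤ 1 / ((p - 1) * lam ^ (p - 1)) := by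
  have hbound_pos : 0 < 1 / ((p - 1) * lam ^ (p - 1)) := by
    have := Real.rpow_pos_of_pos hlam (p - 1)
    have : 0 < p - 1 := sub_pos.mpr hp
    positivity
  by_cases hm_int : IntegrableOn m (Icc a b)
  swap
  · rw [intervalIntegral.integral_undef (by rwa [intervalIntegrable_iff_integrableOn_Icc_of_le hab])]
    exact hbound_pos.le
  have hc_pos : ∀ t ∈ Icc a b, 0 < c t := fun t ht => hlam.trans_le (hc_ge t ht)
  have hca : c a ^ (1 - p) ≤ lam ^ (1 - p) :=
    Real.rpow_le_rpow_of_nonpos hlam (hc_ge a (left_mem_Icc.mpr hab)) (by linarith)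
  have hcb : 0 ≤ c b ^ (1 - p) := (Real.rpow_pos_of_pos (hc_pos b (right_mem_Icc.mpr hab)) _).le
  calc ∫ t in a..b, m t ≤ (c a ^ (1 - p) - c b ^ (1 - p)) / (p - 1) :=
        integral_le_of_mul_rpow_le_deriv hab hp.ne' hc_pos hc_cont hc_deriv hm_int hmc
    _ ≤ lam ^ (1 - p) / (p - 1) := by gcongr; linarith
    _ = 1 / ((p - 1) * lam ^ (p - 1)) := by
      rw [← neg_sub p 1, Real.rpow_neg hlam.le]; field_simp

theorem log_estimate_ode_step_general (p K lam b T₀ T₁ : ℝ) (hp : 1 < p) (hK : 0 < K)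
    (hlam : 0 < lam) (hT : T₀ < T₁) (W W' m : ℝ → ℝ)
    (hW : ∀ t ∈ Set.Icc T₀ T₁, HasDerivWithinAt W (W' t) (Set.Icc T₀ T₁) t)
    (hWanti : AntitoneOn W (Set.Icc T₀ T₁))
    (hW0 : W T₀ = b)
    (hineq : ∀ t ∈ Set.Icc T₀ T₁, W' t + (m t / K) * (b + lam - W t) ^ p ≤ 0) :
    ∫ t in T₀..T₁, m t ≤ K / ((p - 1) * lam ^ (p - 1)) := by
  have hW_ge : ∀ t ∈ Icc T₀ T₁, lam ≤ b + lam - W t := fun t ht => by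
    have := hWanti (left_mem_Icc.mpr hT.le) ht ht.1
    linarith
  have hW_cont : ContinuousOn (fun t => b + lam - W t) (Icc T₀ T₁) :=
    continuousOn_const.sub fun t ht => (hW t ht).continuousWithinAt
  have hW_deriv : ∀ t ∈ Ioo T₀ T₁, HasDerivAt (fun t => b + lam - W t) (-W' t) t := fun t ht =>
    ((hW t (Ioo_subset_Icc_self ht)).hasDerivAt (Icc_mem_nhds ht.1 ht.2)).const_sub _
  have hscaled := integral_le_one_div_of_mul_rpow_le_deriv (m := fun t => m t / K) hT.le hp hlam hW_ge
    hW_cont hW_deriv fun t ht => by linarith [hineq t (Ioo_subset_Icc_self ht)]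
  rwa [intervalIntegral.integral_div, div_le_iff₀ hK, div_mul_comm, mul_one] at hscaled

/-- The differential-inequality step in the logarithmic estimate (Lemma 5.3): if `W` is a
nonincreasing `C¹` function on `[T₀, T₁]` with `W(T₀) = b` and `m ≥ 0` is measurable with
`W'(t) + (m(t)/K)(b + λ - W(t))^p ≤ 0` on `[T₀, T₁]`, then
`∫_{T₀}^{T₁} m(t) dt ≤ K/((p-1) λ^{p-1})`. -/
theorem log_estimate_ode_step (p K lam b T₀ T₁ : ℝ) (hp : 1 < p) (hK : 0 < K)
    (hlam : 0 < lam) (hT : T₀ < T₁) (W W' m : ℝ → ℝ)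
    (hW : ∀ t ∈ Set.Icc T₀ T₁, HasDerivWithinAt W (W' t) (Set.Icc T₀ T₁) t)
    (hW' : ContinuousOn W' (Set.Icc T₀ T₁))
    (hWanti : AntitoneOn W (Set.Icc T₀ T₁))
    (hW0 : W T₀ = b)
    (hm : Measurable m) (hm0 : ∀ t ∈ Set.Icc T₀ T₁, 0 ≤ m t)
    (hineq : ∀ t ∈ Set.Icc T₀ T₁, W' t + (m t / K) * (b + lam - W t) ^ p ≤ 0) :
    ∫ t in T₀..T₁, m t ≤ K / ((p - 1) * lam ^ (p - 1)) :=
  log_estimate_ode_step_general p K lam b T₀ T₁ hp hK hlam hT W W' m hW hWanti hW0 hineq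
end

section
/- Let p > 2. There exists a constant λ = λ(p) > 0, depending only on p, such that for all real numbers v, k > 0, writing ξ((v−k)₊) = (p − 1)·∫_{k}^{v} (η − k)₊·η^{p−2} dη, one has (1/λ)·(v + k)^{p−2}·((v − k)₊)² ≤ ξ((v−k)₊) ≤ λ·(v + k)^{p−2}·((v − k)₊)². -/
/-!
On `[k, v]` the weight `η ^ (p - 2)` lies between `((v + k) / 2) ^ (p - 2)` (on the upper half
`[(k + v) / 2, v]`) and `(v + k) ^ (p - 2)`, while `∫ (η - k)` over `[k, v]` and over its upper
half are `(v - k)² / 2` and at least `(v - k)² / 4`. Hence the integral is comparable to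
`(v + k) ^ (p - 2) (v - k)²` with constants `2 ^ (-p)` and `1 / 2`.
-/

open intervalIntegral Set

namespace PosPartWeight

variable {k v r : ℝ}

theorem integral_eq_zero_of_le (f : ℝ → ℝ) (hvk : v ≤ k) :
    ∫ η in k..v, max (η - k) 0 * f η = 0 := by
  rw [integral_congr (g := fun _ => (0 : ℝ)), integral_zero]
  intro η hη
  rw [uIcc_of_ge hvk] at hη
  simp [sub_nonpos.mpr hη.2]

theorem intervalIntegrable (hr : 0 ≤ r) (a b : ℝ) :
    IntervalIntegrable (fun η => max (η - k) 0 * η ^ r) MeasureTheory.volume a b :=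
  ((continuous_id.sub continuous_const).max continuous_const).mul
    (Real.continuous_rpow_const hr) |>.intervalIntegrable a b

theorem integral_le (hk : 0 ≤ k) (hkv : k ≤ v) (hr : 0 ≤ r) :
    ∫ η in k..v, max (η - k) 0 * η ^ r ≤ (v + k) ^ r * (v - k) ^ 2 / 2 := by
  calc ∫ η in k..v, max (η - k) 0 * η ^ r
      ≤ ∫ η in k..v, (η - k) * (v + k) ^ r := by
        refine integral_mono_on hkv (intervalIntegrable hr k v)
          (by apply Continuous.intervalIntegrable; fun_prop) fun η hη => ?_
        rw [max_eq_left (by linarith [hη.1])]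
        exact mul_le_mul_of_nonneg_left
          (Real.rpow_le_rpow (by linarith [hη.1]) (by linarith [hη.2]) hr) (by linarith [hη.1])
    _ = (v + k) ^ r * (v - k) ^ 2 / 2 := by
        rw [integral_mul_const, integral_comp_sub_right (fun η => η) k, integral_id]
        ring

theorem le_integral (hk : 0 ≤ k) (hkv : k ≤ v) (hr : 0 ≤ r) :
    (v + k) ^ r * (v - k) ^ 2 / 2 ^ (r + 2) ≤ ∫ η in k..v, max (η - k) 0 * η ^ r := by
  set m := (k + v) / 2 with hm
  have hkm : k ≤ m := by linarith
  have hmv : m ≤ v := by linarith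
  have hlower : 0 ≤ ∫ η in k..m, max (η - k) 0 * η ^ r :=
    integral_nonneg hkm fun η hη => mul_nonneg (le_max_right _ _)
      (Real.rpow_nonneg (by linarith [hη.1]) r)
  have hupper : ∫ η in m..v, (v - k) / 2 * ((v + k) / 2) ^ r
      ≤ ∫ η in m..v, max (η - k) 0 * η ^ r := by
    refine integral_mono_on hmv intervalIntegrable_const (intervalIntegrable hr m v)
      fun η hη => mul_le_mul ?_ ?_ (Real.rpow_nonneg (by linarith) r) (le_max_right _ _)
    · exact le_max_of_le_left (by linarith [hη.1])
    · exact Real.rpow_le_rpow (by linarith) (by linarith [hη.1]) hr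
  have hconst : ∫ η in m..v, (v - k) / 2 * ((v + k) / 2) ^ r
      = (v + k) ^ r * (v - k) ^ 2 / 2 ^ (r + 2) := by
    rw [integral_const, smul_eq_mul, Real.div_rpow (by linarith) zero_le_two,
      Real.rpow_add two_pos, Real.rpow_two]
    field_simp
    ring
  rw [← integral_add_adjacent_intervals (intervalIntegrable hr k m)
    (intervalIntegrable hr m v)]
  linarith

end PosPartWeight

/-- Lemma 2.8: for `p > 2` there is `λ = λ(p) > 0` such that for all `v, k > 0`, with
`ξ((v-k)₊) = (p-1) ∫_k^v (η-k)₊ η^{p-2} dη`, one has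
`(1/λ)(v+k)^{p-2}((v-k)₊)² ≤ ξ((v-k)₊) ≤ λ (v+k)^{p-2}((v-k)₊)²`. -/
theorem aux_function_comparison (p : ℝ) (hp : 2 < p) :
    ∃ lam : ℝ, 0 < lam ∧
      ∀ v k : ℝ, 0 < v → 0 < k →
        (1 / lam) * (v + k) ^ (p - 2) * (max (v - k) 0) ^ 2 ≤
            (p - 1) * ∫ η in k..v, max (η - k) 0 * η ^ (p - 2) ∧
          (p - 1) * (∫ η in k..v, max (η - k) 0 * η ^ (p - 2)) ≤
            lam * ((v + k) ^ (p - 2) * (max (v - k) 0) ^ 2) := by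
  have hp1 : 0 < p - 1 := by linarith
  have hr : 0 ≤ p - 2 := by linarith
  refine ⟨max (2 ^ p / (p - 1)) ((p - 1) / 2), lt_max_of_lt_left (by positivity),
    fun v k _ hk => ?_⟩
  set lam := max (2 ^ p / (p - 1)) ((p - 1) / 2)
  rcases le_total v k with hvk | hkv
  · simp [PosPartWeight.integral_eq_zero_of_le _ hvk, max_eq_right (sub_nonpos.mpr hvk)]
  set A := (v + k) ^ (p - 2) * (v - k) ^ 2
  have hlower := PosPartWeight.le_integral hk.le hkv hr
  have hupper := PosPartWeight.integral_le hk.le hkv hr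
  rw [sub_add_cancel] at hlower
  rw [max_eq_left (sub_nonneg.mpr hkv)]
  constructor
  · have hinv : 1 / lam ≤ (p - 1) / 2 ^ p := by
      rw [one_div_le (by positivity) (by positivity), one_div_div]
      exact le_max_left _ _
    calc 1 / lam * (v + k) ^ (p - 2) * (v - k) ^ 2 = 1 / lam * A := by ring
      _ ≤ (p - 1) / 2 ^ p * A := by gcongr
      _ = (p - 1) * ((v + k) ^ (p - 2) * (v - k) ^ 2 / 2 ^ p) := by ring
      _ ≤ _ := by gcongr
  · calc (p - 1) * ∫ η in k..v, max (η - k) 0 * η ^ (p - 2)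
        ≤ (p - 1) * ((v + k) ^ (p - 2) * (v - k) ^ 2 / 2) := by gcongr
      _ = (p - 1) / 2 * A := by ring
      _ ≤ lam * A := by gcongr; exact le_max_right _ _
end
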